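/- arXiv:1901.06872 — 5 statements merged into one kernel-verified Lean document; each statement's English description precedes it below -/
import Mathlib

section
/- Let m ≥ 2 be an integer and let α be a real number with α ≥ (2·m^{3/2} + 3m − 1)/(m−1)^2. Then Q_{m,α}(t) ≥ 0 for all real t ≥ 0. -/
/-!
Put `c = m - 1`, `s = √m` (so `c = s² - 1`) and `v = c² t`. Then `c² Q` is a cubic in `v` with
a double root at `v = α (s + 1)`:
`c² Q = (v - α (s + 1))² (v + α (2s - 1)) + α³ (α c² - (s + 1)² (2s - 1))`,
and the hypothesis on `α` is exactly `α c² ≥ (s + 1)² (2s - 1)`, since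
`2 s³ + 3 s² - 1 = (s + 1)² (2s - 1)`. The threshold is therefore sharp.
-/

/-- `Q c α t` is `Q_{m,α}(t)` with `c = m - 1`. -/
def Q (c α t : ℝ) : ℝ :=
  c ^ 4 * t ^ 3 - 3 * c ^ 2 * α * t ^ 2 - 3 * c * α ^ 2 * t + α ^ 4

theorem sq_mul_Q_sq_sub_one (s α t : ℝ) :
    (s ^ 2 - 1) ^ 2 * Q (s ^ 2 - 1) α t =
      ((s ^ 2 - 1) ^ 2 * t - α * (s + 1)) ^ 2 * ((s ^ 2 - 1) ^ 2 * t + α * (2 * s - 1))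
        + α ^ 3 * (α * (s ^ 2 - 1) ^ 2 - (s + 1) ^ 2 * (2 * s - 1)) := by
  unfold Q
  ring

theorem Q_sq_sub_one_nonneg {s α t : ℝ} (hs : 1 / 2 ≤ s)
    (hα : (s + 1) ^ 2 * (2 * s - 1) ≤ α * (s ^ 2 - 1) ^ 2) (ht : 0 ≤ t) :
    0 ≤ Q (s ^ 2 - 1) α t := by
  rcases eq_or_ne (s ^ 2 - 1) 0 with hc | hc
  · rw [hc, Q]
    ring_nf
    positivity
  have hc2 : 0 < (s ^ 2 - 1) ^ 2 := by positivity
  have hα0 : 0 ≤ α := by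
    have : 0 ≤ (s + 1) ^ 2 * (2 * s - 1) := mul_nonneg (sq_nonneg _) (by linarith)
    exact nonneg_of_mul_nonneg_left (this.trans hα) hc2
  refine nonneg_of_mul_nonneg_right ?_ hc2
  rw [sq_mul_Q_sq_sub_one]
  have hlin : 0 ≤ (s ^ 2 - 1) ^ 2 * t + α * (2 * s - 1) :=
    add_nonneg (by positivity) (mul_nonneg hα0 (by linarith))
  have hgap : 0 ≤ α * (s ^ 2 - 1) ^ 2 - (s + 1) ^ 2 * (2 * s - 1) := sub_nonneg.mpr hα
  positivity

/-- For an integer `m ≥ 2` and a real `α ≥ (2 m^{3/2} + 3m − 1)/(m−1)²`, the cubic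
`Q_{m,α}(t) = (m−1)⁴ t³ − 3(m−1)² α t² − 3(m−1) α² t + α⁴` is nonnegative for all `t ≥ 0`. -/
theorem Q_nonneg (m : ℕ) (hm : 2 ≤ m) (α : ℝ)
    (hα : α ≥ (2 * (m : ℝ) ^ ((3 : ℝ) / 2) + 3 * (m : ℝ) - 1) / ((m : ℝ) - 1) ^ 2) :
    ∀ t : ℝ, 0 ≤ t →
      ((m : ℝ) - 1) ^ 4 * t ^ 3 - 3 * ((m : ℝ) - 1) ^ 2 * α * t ^ 2
        - 3 * ((m : ℝ) - 1) * α ^ 2 * t + α ^ 4 ≥ 0 := by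
  intro t ht
  have hm2 : (2 : ℝ) ≤ m := by exact_mod_cast hm
  set s := √(m : ℝ)
  have hsq : s ^ 2 = m := Real.sq_sqrt (by positivity)
  have hs : 1 ≤ s := Real.one_le_sqrt.mpr (by linarith)
  have hpow : (m : ℝ) ^ ((3 : ℝ) / 2) = s ^ 3 := by
    rw [Real.rpow_div_two_eq_sqrt _ (by positivity)]
    exact_mod_cast Real.rpow_natCast s 3
  have hc : (m : ℝ) - 1 = s ^ 2 - 1 := by rw [hsq]
  have hthreshold : (s + 1) ^ 2 * (2 * s - 1) ≤ α * (s ^ 2 - 1) ^ 2 := by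
    rw [hpow, ← hsq, ge_iff_le, div_le_iff₀ (by rw [hsq]; nlinarith)] at hα
    linear_combination hα
  rw [hc]
  exact Q_sq_sub_one_nonneg (by linarith) hthreshold ht
end

section
/- Let m ≥ 2 be an integer and α > 0 a real number. For every point (x,y) ∈ ℝ^m × ℝ with x ≠ 0 and y > 0, the divergence of the vector field ξ(x,y) = −y^α·∇F_{m,α}(x,y)/|∇F_{m,α}(x,y)| (i.e., the sum of the m+1 partial derivatives of its components) satisfies: div ξ(x,y) = −|∇F_{m,α}(x,y)|^{−3}·(m−1)·α·y^α·( (m−1)^4·y^6 − 3(m−1)^2·α·y^4·|x|^2 − 3(m−1)·α^2·y^2·|x|^4 + α^4·|x|^6 )·( α·|x|^2 − (m−1)·y^2 ). -/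
open Filter

/-- The gradient of `F_{m,α}(x,y) = (1/4)(α²|x|⁴ − (m−1)² y⁴)`, namely
`∇F_{m,α}(x,y) = (α²|x|² x, −(m−1)² y³)`. -/
noncomputable def gradF (m : ℕ) (α : ℝ) (z : EuclideanSpace ℝ (Fin m) × ℝ) :
    EuclideanSpace ℝ (Fin m) × ℝ :=
  ((α ^ 2 * ‖z.1‖ ^ 2) • z.1, -((m : ℝ) - 1) ^ 2 * z.2 ^ 3)

/-- The Euclidean length `|∇F_{m,α}(x,y)|` of the gradient. -/
noncomputable def normGradF (m : ℕ) (α : ℝ) (z : EuclideanSpace ℝ (Fin m) × ℝ) : ℝ :=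
  Real.sqrt (‖(gradF m α z).1‖ ^ 2 + (gradF m α z).2 ^ 2)

/-- The vector field `ξ(x,y) = −y^α · ∇F_{m,α}(x,y)/|∇F_{m,α}(x,y)|`. -/
noncomputable def xiField (m : ℕ) (α : ℝ) (z : EuclideanSpace ℝ (Fin m) × ℝ) :
    EuclideanSpace ℝ (Fin m) × ℝ :=
  (-(z.2 ^ α) / normGradF m α z) • gradF m α z

/-- The divergence of `ξ`, i.e. the sum of the `m+1` partial derivatives of its components. -/
noncomputable def divXi (m : ℕ) (α : ℝ) (z : EuclideanSpace ℝ (Fin m) × ℝ) : ℝ :=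
  (∑ i : Fin m, (fderiv ℝ (xiField m α) z (EuclideanSpace.single i 1, 0)).1 i) +
    (fderiv ℝ (xiField m α) z (0, 1)).2

/-! The field has the form `ξ(x,y) = (a(x,y) • x, b(x,y))` with scalar `a, b`, and for such a
field `div ξ = m a + ⟨∇ₓa, x⟩ + ∂_y b`. The two derivatives left are one-variable ones: `⟨∇ₓa, x⟩`
is the derivative of `t ↦ a(t x, y)` at `t = 1`, and `∂_y b` that of `t ↦ b(x, t)` at `y`.
Since `|∇F|² = α⁴|x|⁶ + (m−1)⁴y⁶`, both are derivatives of quotients `f / √g`, and after clearing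
`|∇F|³` the claim is a polynomial identity modulo that relation. -/

section Divergence

variable {m : ℕ}

noncomputable def divergence (V : EuclideanSpace ℝ (Fin m) × ℝ → EuclideanSpace ℝ (Fin m) × ℝ)
    (z : EuclideanSpace ℝ (Fin m) × ℝ) : ℝ :=
  (∑ i : Fin m, (fderiv ℝ V z (EuclideanSpace.single i 1, 0)).1 i) + (fderiv ℝ V z (0, 1)).2

lemma sum_fderiv_smul_fst_single {F : Type*} [NormedAddCommGroup F] [NormedSpace ℝ F]
    {a : EuclideanSpace ℝ (Fin m) × F → ℝ} {z : EuclideanSpace ℝ (Fin m) × F}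
    (ha : DifferentiableAt ℝ a z) :
    ∑ i : Fin m, fderiv ℝ (fun w => a w • w.1) z (EuclideanSpace.single i 1, 0) i =
      m * a z + fderiv ℝ a z (z.1, 0) := by
  have hsum : (z.1, (0 : F)) = ∑ i : Fin m, z.1 i • (EuclideanSpace.single i (1 : ℝ), (0 : F)) := by
    conv_lhs => rw [← (EuclideanSpace.basisFun (Fin m) ℝ).sum_repr z.1]
    simp [Prod.ext_iff, Prod.fst_sum, Prod.snd_sum]
  rw [show (fun w => a w • w.1) = a • Prod.fst from rfl, fderiv_smul ha differentiableAt_fst,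
    hsum, map_sum]
  simp only [map_smul, smul_eq_mul]
  simp [Finset.sum_add_distrib, fderiv_fst, mul_comm]

lemma fderiv_apply_fst_eq_of_hasDerivAt {F : Type*} [NormedAddCommGroup F] [NormedSpace ℝ F]
    {a : EuclideanSpace ℝ (Fin m) × F → ℝ} {x : EuclideanSpace ℝ (Fin m)} {y : F} {a' : ℝ}
    (ha : DifferentiableAt ℝ a (x, y)) (ha' : HasDerivAt (fun t : ℝ => a (t • x, y)) a' 1) :
    fderiv ℝ a (x, y) (x, 0) = a' := by
  have hcurve : HasDerivAt (fun t : ℝ => (t • x, y)) (x, (0 : F)) 1 :=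
    ((hasDerivAt_id (1 : ℝ)).smul_const x |>.congr_deriv (one_smul ℝ x)).prodMk
      (hasDerivAt_const 1 y)
  refine HasDerivAt.unique ?_ ha'
  exact ha.hasFDerivAt.comp_hasDerivAt_of_eq 1 hcurve (by rw [one_smul])

lemma fderiv_apply_snd_eq_of_hasDerivAt {E : Type*} [NormedAddCommGroup E] [NormedSpace ℝ E]
    {b : E × ℝ → ℝ} {x : E} {y b' : ℝ}
    (hb : DifferentiableAt ℝ b (x, y)) (hb' : HasDerivAt (fun t : ℝ => b (x, t)) b' y) :
    fderiv ℝ b (x, y) (0, 1) = b' :=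
  (hb.hasFDerivAt.comp_hasDerivAt y ((hasDerivAt_const y x).prodMk (hasDerivAt_id y))).unique hb'

lemma divergence_smul_fst_prodMk {a b : EuclideanSpace ℝ (Fin m) × ℝ → ℝ}
    {x : EuclideanSpace ℝ (Fin m)} {y a' b' : ℝ}
    (ha : DifferentiableAt ℝ a (x, y)) (hb : DifferentiableAt ℝ b (x, y))
    (ha' : HasDerivAt (fun t : ℝ => a (t • x, y)) a' 1)
    (hb' : HasDerivAt (fun t : ℝ => b (x, t)) b' y) :
    divergence (fun w => (a w • w.1, b w)) (x, y) = m * a (x, y) + a' + b' := by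
  rw [divergence, DifferentiableAt.fderiv_prodMk (f₁ := fun w => a w • w.1)
    (ha.smul differentiableAt_fst) hb]
  simp only [ContinuousLinearMap.prod_apply]
  rw [sum_fderiv_smul_fst_single ha, fderiv_apply_fst_eq_of_hasDerivAt ha ha',
    fderiv_apply_snd_eq_of_hasDerivAt hb hb']

end Divergence

lemma HasDerivAt.div_sqrt {f g : ℝ → ℝ} {f' g' t : ℝ} (hf : HasDerivAt f f' t)
    (hg : HasDerivAt g g' t) (hgt : 0 < g t) :
    HasDerivAt (fun s => f s / √(g s)) ((2 * f' * g t - f t * g') / (2 * √(g t) ^ 3)) t := by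
  have hsq : 0 < √(g t) := Real.sqrt_pos.mpr hgt
  refine (hf.div (hg.sqrt hgt.ne') hsq.ne').congr_deriv ?_
  field_simp
  rw [Real.sq_sqrt hgt.le]
  ring

noncomputable def xiRadialCoeff (m : ℕ) (α : ℝ) (z : EuclideanSpace ℝ (Fin m) × ℝ) : ℝ :=
  -α ^ 2 * z.2 ^ α * ‖z.1‖ ^ 2 / normGradF m α z

noncomputable def xiVertical (m : ℕ) (α : ℝ) (z : EuclideanSpace ℝ (Fin m) × ℝ) : ℝ :=
  ((m : ℝ) - 1) ^ 2 * z.2 ^ α * z.2 ^ 3 / normGradF m α z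

lemma xiField_eq (m : ℕ) (α : ℝ) :
    xiField m α = fun z => (xiRadialCoeff m α z • z.1, xiVertical m α z) := by
  funext z
  simp only [xiField, gradF, xiRadialCoeff, xiVertical, Prod.smul_mk, smul_smul, smul_eq_mul]
  exact Prod.ext (congrArg (· • z.1) (by ring)) (by ring)

lemma normGradF_eq_sqrt (m : ℕ) (α : ℝ) (z : EuclideanSpace ℝ (Fin m) × ℝ) :
    normGradF m α z = √(α ^ 4 * ‖z.1‖ ^ 6 + ((m : ℝ) - 1) ^ 4 * z.2 ^ 6) := by
  rw [normGradF, gradF, norm_smul, Real.norm_of_nonneg (by positivity)]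
  ring_nf

lemma normGradF_pos {m : ℕ} {α : ℝ} (hα : α ≠ 0) {x : EuclideanSpace ℝ (Fin m)} (hx : x ≠ 0)
    (y : ℝ) : 0 < normGradF m α (x, y) := by
  have := norm_pos_iff.mpr hx
  rw [normGradF_eq_sqrt]
  positivity

lemma differentiableAt_normGradF {m : ℕ} {α : ℝ} (hα : α ≠ 0) {x : EuclideanSpace ℝ (Fin m)}
    (hx : x ≠ 0) (y : ℝ) : DifferentiableAt ℝ (normGradF m α) (x, y) := by
  have hnorm : DifferentiableAt ℝ (fun w : EuclideanSpace ℝ (Fin m) × ℝ => ‖w.1‖) (x, y) :=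
    differentiableAt_fst.norm ℝ hx
  have := norm_pos_iff.mpr hx
  rw [funext (normGradF_eq_sqrt m α)]
  exact DifferentiableAt.sqrt (by fun_prop) (by dsimp only; positivity)

lemma differentiableAt_xiRadialCoeff {m : ℕ} {α : ℝ} (hα : α ≠ 0)
    {x : EuclideanSpace ℝ (Fin m)} (hx : x ≠ 0) {y : ℝ} (hy : 0 < y) :
    DifferentiableAt ℝ (xiRadialCoeff m α) (x, y) := by
  have := differentiableAt_normGradF hα hx y
  have : DifferentiableAt ℝ (fun w : EuclideanSpace ℝ (Fin m) × ℝ => ‖w.1‖) (x, y) :=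
    differentiableAt_fst.norm ℝ hx
  unfold xiRadialCoeff
  fun_prop (disch := first | exact hy.ne' | exact (normGradF_pos hα hx y).ne')

lemma differentiableAt_xiVertical {m : ℕ} {α : ℝ} (hα : α ≠ 0)
    {x : EuclideanSpace ℝ (Fin m)} (hx : x ≠ 0) {y : ℝ} (hy : 0 < y) :
    DifferentiableAt ℝ (xiVertical m α) (x, y) := by
  have := differentiableAt_normGradF hα hx y
  unfold xiVertical
  fun_prop (disch := first | exact hy.ne' | exact (normGradF_pos hα hx y).ne')

lemma hasDerivAt_xiRadialCoeff_smul {m : ℕ} {α : ℝ} (hα : α ≠ 0)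
    {x : EuclideanSpace ℝ (Fin m)} (hx : x ≠ 0) (y : ℝ) :
    HasDerivAt (fun t : ℝ => xiRadialCoeff m α (t • x, y))
      (α ^ 2 * y ^ α * ‖x‖ ^ 2 * (α ^ 4 * ‖x‖ ^ 6 - 2 * ((m : ℝ) - 1) ^ 4 * y ^ 6) /
        normGradF m α (x, y) ^ 3) 1 := by
  have hfun : (fun t : ℝ => xiRadialCoeff m α (t • x, y)) = fun t =>
      -α ^ 2 * y ^ α * ‖x‖ ^ 2 * t ^ 2 /
        √(α ^ 4 * ‖x‖ ^ 6 * t ^ 6 + ((m : ℝ) - 1) ^ 4 * y ^ 6) := by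
    funext t
    rw [xiRadialCoeff, normGradF_eq_sqrt, norm_smul, Real.norm_eq_abs, mul_pow, mul_pow, sq_abs,
      (by decide : Even 6).pow_abs]
    ring_nf
  have := norm_pos_iff.mpr hx
  have hpos : 0 < α ^ 4 * ‖x‖ ^ 6 * 1 ^ 6 + ((m : ℝ) - 1) ^ 4 * y ^ 6 := by positivity
  rw [hfun]
  refine (((hasDerivAt_pow 2 (1 : ℝ)).const_mul _).div_sqrt
    (((hasDerivAt_pow 6 (1 : ℝ)).const_mul _).add_const _) hpos).congr_deriv ?_
  rw [normGradF_eq_sqrt]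
  field_simp
  ring

lemma hasDerivAt_xiVertical_prodMk {m : ℕ} {α : ℝ} (hα : α ≠ 0)
    {x : EuclideanSpace ℝ (Fin m)} (hx : x ≠ 0) {y : ℝ} (hy : 0 < y) :
    HasDerivAt (fun t : ℝ => xiVertical m α (x, t))
      (((m : ℝ) - 1) ^ 2 * y ^ α * y ^ 2 *
          ((α + 3) * α ^ 4 * ‖x‖ ^ 6 + α * ((m : ℝ) - 1) ^ 4 * y ^ 6) /
        normGradF m α (x, y) ^ 3) y := by
  have hfun : (fun t : ℝ => xiVertical m α (x, t)) = fun t =>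
      ((m : ℝ) - 1) ^ 2 * (t ^ α * t ^ 3) /
        √(α ^ 4 * ‖x‖ ^ 6 + ((m : ℝ) - 1) ^ 4 * t ^ 6) := by
    funext t
    rw [xiVertical, normGradF_eq_sqrt, mul_assoc]
  have := norm_pos_iff.mpr hx
  have hpos : 0 < α ^ 4 * ‖x‖ ^ 6 + ((m : ℝ) - 1) ^ 4 * y ^ 6 := by positivity
  rw [hfun]
  refine ((((Real.hasDerivAt_rpow_const (Or.inl hy.ne')).mul (hasDerivAt_pow 3 y)).const_mul
    _).div_sqrt (((hasDerivAt_pow 6 y).const_mul _).const_add _) hpos).congr_deriv ?_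
  rw [normGradF_eq_sqrt, Real.rpow_sub_one hy.ne', Pi.mul_apply]
  field_simp
  ring

theorem divergence_xi_general (m : ℕ) (α : ℝ) (hα : 0 < α)
    (x : EuclideanSpace ℝ (Fin m)) (y : ℝ) (hx : x ≠ 0) (hy : 0 < y) :
    divXi m α (x, y) =
      -((normGradF m α (x, y))⁻¹ ^ 3) * ((m : ℝ) - 1) * α * y ^ α *
        (((m : ℝ) - 1) ^ 4 * y ^ 6 - 3 * ((m : ℝ) - 1) ^ 2 * α * y ^ 4 * ‖x‖ ^ 2
          - 3 * ((m : ℝ) - 1) * α ^ 2 * y ^ 2 * ‖x‖ ^ 4 + α ^ 4 * ‖x‖ ^ 6) *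
        (α * ‖x‖ ^ 2 - ((m : ℝ) - 1) * y ^ 2) := by
  have hdiv := divergence_smul_fst_prodMk (differentiableAt_xiRadialCoeff hα.ne' hx hy)
    (differentiableAt_xiVertical hα.ne' hx hy) (hasDerivAt_xiRadialCoeff_smul hα.ne' hx y)
    (hasDerivAt_xiVertical_prodMk hα.ne' hx hy)
  rw [← xiField_eq] at hdiv
  have hN := normGradF_pos hα.ne' hx y
  have hN2 : normGradF m α (x, y) ^ 2 = α ^ 4 * ‖x‖ ^ 6 + ((m : ℝ) - 1) ^ 4 * y ^ 6 := by
    rw [normGradF_eq_sqrt, Real.sq_sqrt (by positivity)]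
  rw [divXi, ← divergence, hdiv, xiRadialCoeff]
  field_simp
  linear_combination -(α * ‖x‖ ^ 2 * m) * hN2

/-- For `m ≥ 2`, `α > 0`, `x ≠ 0` and `y > 0`, the divergence of
`ξ(x,y) = −y^α ∇F_{m,α}/|∇F_{m,α}|` equals
`−|∇F|⁻³ (m−1) α y^α ((m−1)⁴y⁶ − 3(m−1)²αy⁴|x|² − 3(m−1)α²y²|x|⁴ + α⁴|x|⁶)(α|x|² − (m−1)y²)`. -/
theorem divergence_xi (m : ℕ) (hm : 2 ≤ m) (α : ℝ) (hα : 0 < α)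
    (x : EuclideanSpace ℝ (Fin m)) (y : ℝ) (hx : x ≠ 0) (hy : 0 < y) :
    divXi m α (x, y) =
      -((normGradF m α (x, y))⁻¹ ^ 3) * ((m : ℝ) - 1) * α * y ^ α *
        (((m : ℝ) - 1) ^ 4 * y ^ 6 - 3 * ((m : ℝ) - 1) ^ 2 * α * y ^ 4 * ‖x‖ ^ 2
          - 3 * ((m : ℝ) - 1) * α ^ 2 * y ^ 2 * ‖x‖ ^ 4 + α ^ 4 * ‖x‖ ^ 6) *
        (α * ‖x‖ ^ 2 - ((m : ℝ) - 1) * y ^ 2) :=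
  divergence_xi_general m α hα x y hx hy
end

section
/- Let m ≥ 2 be an integer and let α > 2/m be a real number. The quartic polynomial P_{m,α} has exactly one negative real root, i.e., there exists a unique γ < 0 with P_{m,α}(γ) = 0. -/
/-!
For `γ < 0` the function `P(γ) / γ²` is strictly decreasing, because the signs of the
coefficients `a₄ > 0`, `a₃ < 0`, `a₁ > 0`, `a₀ < 0` make every term of its derivative
`2a₄γ + a₃ - a₁/γ² - 2a₀/γ³` negative; so there is at most one negative root. One exists
by the intermediate value theorem, since `P(0) = a₀ < 0 < P(-1)`.
-/

/-- The quartic polynomial `P_{m,α}(γ)` from the analysis of the lower solution. -/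
noncomputable def Pquartic (m : ℕ) (α : ℝ) (γ : ℝ) : ℝ :=
  ((m : ℝ) + α) ^ 3 * γ ^ 4
    + (-(((m : ℝ) + α) ^ 2 * ((m : ℝ) + α + 1))) * γ ^ 3
    + (((m : ℝ) + α) * (2 * (m : ℝ) + 6 * α - 4 * (m : ℝ) * α - 1)) * γ ^ 2
    + (4 * (m : ℝ) ^ 2 * α + 4 * α ^ 2 * (m : ℝ) - 4 * α ^ 2 - 5 * α - (m : ℝ) + 1) * γ
    + (-(8 * ((m : ℝ) - 1) * α))

section Quartic

variable {a b c d e : ℝ}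

/-- The discrete form of the monotonicity of `P(γ) / γ²`: `y² P(x) - x² P(y)` factors as
`(x - y)` times a term that is negative for `x, y < 0`. -/
theorem eq_of_quartic_eq_zero_of_neg (ha : 0 ≤ a) (hb : b ≤ 0) (hd : 0 ≤ d) (he : e < 0)
    {x y : ℝ} (hx : x < 0) (hy : y < 0)
    (hPx : a * x ^ 4 + b * x ^ 3 + c * x ^ 2 + d * x + e = 0)
    (hPy : a * y ^ 4 + b * y ^ 3 + c * y ^ 2 + d * y + e = 0) :
    x = y := by
  have key : (x - y) * (a * (x ^ 2 * y ^ 2) * (x + y) + b * (x ^ 2 * y ^ 2)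
      - d * (x * y) - e * (x + y)) = 0 := by
    linear_combination y ^ 2 * hPx - x ^ 2 * hPy
  have hxy : 0 < x * y := mul_pos_of_neg_of_neg hx hy
  have hfactor : a * (x ^ 2 * y ^ 2) * (x + y) + b * (x ^ 2 * y ^ 2)
      - d * (x * y) - e * (x + y) < 0 := by
    have h₁ : a * (x ^ 2 * y ^ 2) * (x + y) ≤ 0 :=
      mul_nonpos_of_nonneg_of_nonpos (by positivity) (by linarith)
    have h₂ : b * (x ^ 2 * y ^ 2) ≤ 0 := mul_nonpos_of_nonpos_of_nonneg hb (by positivity)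
    have h₃ : 0 ≤ d * (x * y) := mul_nonneg hd hxy.le
    have h₄ : 0 < e * (x + y) := mul_pos_of_neg_of_neg he (by linarith)
    linarith
  exact sub_eq_zero.mp ((mul_eq_zero.mp key).resolve_right hfactor.ne)

theorem existsUnique_neg_root_quartic (ha : 0 ≤ a) (hb : b ≤ 0) (hd : 0 ≤ d) (he : e < 0)
    {t : ℝ} (ht : t < 0) (hPt : 0 < a * t ^ 4 + b * t ^ 3 + c * t ^ 2 + d * t + e) :
    ∃! x : ℝ, x < 0 ∧ a * x ^ 4 + b * x ^ 3 + c * x ^ 2 + d * x + e = 0 := by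
  have hcont : ContinuousOn (fun x : ℝ => a * x ^ 4 + b * x ^ 3 + c * x ^ 2 + d * x + e)
      (Set.Icc t 0) := by fun_prop
  obtain ⟨x, hx, hPx⟩ := intermediate_value_Ioo' ht.le hcont ⟨by simpa using he, hPt⟩
  exact ⟨x, ⟨hx.2, hPx⟩, fun y hy => eq_of_quartic_eq_zero_of_neg ha hb hd he hy.1 hx.2 hy.2 hPx⟩

end Quartic

theorem Pquartic_neg_one (m : ℕ) (α : ℝ) :
    Pquartic m α (-1) = 2 * ((m : ℝ) + α) * ((m : ℝ) - α) ^ 2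
      + 3 * (m : ℝ) ^ 2 + 2 * (m : ℝ) * α + 11 * α ^ 2 + 12 * α - 1 := by
  unfold Pquartic
  ring

theorem Pquartic_linear_coeff_pos {m α : ℝ} (hm : 2 ≤ m) (hmα : 2 < m * α) :
    0 < 4 * m ^ 2 * α + 4 * α ^ 2 * m - 4 * α ^ 2 - 5 * α - m + 1 := by
  have hα : 0 < α := by nlinarith
  nlinarith [mul_pos hα hα, mul_lt_mul_of_pos_left hmα (by linarith : (0 : ℝ) < 4 * m - 3)]

/-- For `m ≥ 2` and `α > 2/m`, the quartic `P_{m,α}` has exactly one negative real root. -/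
theorem P_unique_negative_root (m : ℕ) (hm : 2 ≤ m) (α : ℝ) (hα : 2 / (m : ℝ) < α) :
    ∃! γ : ℝ, γ < 0 ∧ Pquartic m α γ = 0 := by
  have hm2 : (2 : ℝ) ≤ m := by exact_mod_cast hm
  have hα0 : 0 < α := lt_trans (by positivity) hα
  have hmα : 2 < (m : ℝ) * α := by rwa [div_lt_iff₀ (by positivity), mul_comm] at hα
  have hP : 0 < Pquartic m α (-1) := by
    rw [Pquartic_neg_one]
    have : 0 ≤ 2 * ((m : ℝ) + α) * ((m : ℝ) - α) ^ 2 := by positivity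
    nlinarith
  exact existsUnique_neg_root_quartic (by positivity)
    (neg_nonpos.mpr (mul_nonneg (sq_nonneg _) (by linarith)))
    (Pquartic_linear_coeff_pos hm2 hmα).le (by nlinarith) (by norm_num : (-1 : ℝ) < 0) hP
end

section
/- Let m ≥ 2 be an integer and let α > 2/m be a real number. The quartic polynomial P_{m,α} has exactly one real root in the interval (1 − 1/(m+α), ∞), i.e., there exists a unique γ > 1 − 1/(m+α) with P_{m,α}(γ) = 0. -/
/-!
Write `s = m + α` and `γ₀ = 1 - 1/s`. At the left endpoint `P(γ₀) = -8α(m - 1)/s < 0`, while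
`P(2) > 0`, so the intermediate value theorem gives a root in `(γ₀, 2)`. Uniqueness comes from
strict monotonicity on `[γ₀, ∞)`: expanded in `u = γ - γ₀`, the derivative `P'(γ₀ + u)` is a
cubic in `u` all of whose coefficients are positive once `m ≥ 2` and `mα > 2`.
-/

noncomputable def PquarticDeriv (m : ℕ) (α : ℝ) (γ : ℝ) : ℝ :=
  4 * ((m : ℝ) + α) ^ 3 * γ ^ 3 - 3 * ((m : ℝ) + α) ^ 2 * ((m : ℝ) + α + 1) * γ ^ 2
    + 2 * ((m : ℝ) + α) * (2 * (m : ℝ) + 6 * α - 4 * (m : ℝ) * α - 1) * γ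
    + (4 * (m : ℝ) ^ 2 * α + 4 * α ^ 2 * (m : ℝ) - 4 * α ^ 2 - 5 * α - (m : ℝ) + 1)

theorem Pquartic_hasDerivAt (m : ℕ) (α γ : ℝ) :
    HasDerivAt (Pquartic m α) (PquarticDeriv m α γ) γ := by
  refine (((((hasDerivAt_pow 4 γ).const_mul _).add ((hasDerivAt_pow 3 γ).const_mul _)).add
    ((hasDerivAt_pow 2 γ).const_mul _)).add ((hasDerivAt_id' γ).const_mul _)).add_const _
    |>.congr_deriv ?_
  unfold PquarticDeriv
  push_cast
  ring

theorem Pquartic_continuous (m : ℕ) (α : ℝ) : Continuous (Pquartic m α) := by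
  unfold Pquartic; fun_prop

theorem Pquartic_one_sub_one_div {m : ℕ} {α : ℝ} (hs : (m : ℝ) + α ≠ 0) :
    Pquartic m α (1 - 1 / ((m : ℝ) + α)) = -(8 * α * ((m : ℝ) - 1)) / ((m : ℝ) + α) := by
  unfold Pquartic
  field_simp
  ring

theorem PquarticDeriv_one_sub_one_div_add {m : ℕ} {α : ℝ} (hs : (m : ℝ) + α ≠ 0) (u : ℝ) :
    PquarticDeriv m α (1 - 1 / ((m : ℝ) + α) + u) =
      ((m : ℝ) ^ 3 - 5 * (m : ℝ) ^ 2 + 8 * m - 4 - (m : ℝ) ^ 2 * α + 6 * m * α - 4 * α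
        - m * α ^ 2 - α ^ 2 + α ^ 3)
      + ((m : ℝ) + α) * (6 * (m : ℝ) ^ 2 + 4 * m * α + 6 * α ^ 2 - 20 * m - 12 * α + 16) * u
      + 3 * ((m : ℝ) + α) ^ 2 * (3 * ((m : ℝ) + α) - 5) * u ^ 2
      + 4 * ((m : ℝ) + α) ^ 3 * u ^ 3 := by
  unfold PquarticDeriv
  field_simp
  ring

-- With `β = α - (M - 1)` this cubic is `β³ + 2(M - 2)β² + β + 2(M - 1)`.
theorem PquarticDeriv_expansion_coeff_zero_pos {M α : ℝ} (hM : 2 ≤ M) (hMα : 2 < M * α) :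
    0 < M ^ 3 - 5 * M ^ 2 + 8 * M - 4 - M ^ 2 * α + 6 * M * α - 4 * α
      - M * α ^ 2 - α ^ 2 + α ^ 3 := by
  have hα : 0 < α := by nlinarith
  rcases le_or_gt (M - 1) α with hβ | hβ
  · have hb : 0 ≤ α - M + 1 := by linarith
    nlinarith [mul_nonneg (mul_nonneg hb hb) hb,
      mul_nonneg (sq_nonneg (α - M + 1)) (by linarith : (0 : ℝ) ≤ 2 * M - 4)]
  · nlinarith [mul_pos hα hα, sq_nonneg (α - M + 1), mul_pos (sub_pos.2 hβ) hα]

theorem PquarticDeriv_expansion_coeff_one_pos {M α : ℝ} (hM : 2 ≤ M) (hMα : 2 < M * α) :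
    0 < 6 * M ^ 2 + 4 * M * α + 6 * α ^ 2 - 20 * M - 12 * α + 16 := by
  nlinarith [sq_nonneg (M - 2), sq_nonneg (α - 1)]

theorem PquarticDeriv_pos {m : ℕ} {α γ : ℝ} (hm : (2 : ℝ) ≤ m) (hmα : 2 < m * α)
    (hγ : 1 - 1 / ((m : ℝ) + α) < γ) : 0 < PquarticDeriv m α γ := by
  have hα : 0 < α := by nlinarith
  have hs : 2 < (m : ℝ) + α := by nlinarith
  obtain ⟨u, hu, rfl⟩ : ∃ u, 0 < u ∧ γ = 1 - 1 / ((m : ℝ) + α) + u :=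
    ⟨γ - (1 - 1 / ((m : ℝ) + α)), by linarith, by ring⟩
  rw [PquarticDeriv_one_sub_one_div_add (by positivity)]
  have h0 := PquarticDeriv_expansion_coeff_zero_pos hm hmα
  have h1 := PquarticDeriv_expansion_coeff_one_pos hm hmα
  have h2 : 0 < 3 * ((m : ℝ) + α) - 5 := by linarith
  positivity

theorem Pquartic_strictMonoOn {m : ℕ} {α : ℝ} (hm : (2 : ℝ) ≤ m) (hmα : 2 < m * α) :
    StrictMonoOn (Pquartic m α) (Set.Ici (1 - 1 / ((m : ℝ) + α))) := by
  refine strictMonoOn_of_deriv_pos (convex_Ici _) (Pquartic_continuous m α).continuousOn ?_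
  intro γ hγ
  rw [interior_Ici] at hγ
  rw [(Pquartic_hasDerivAt m α γ).deriv]
  exact PquarticDeriv_pos hm hmα hγ

theorem Pquartic_two_pos {m : ℕ} {α : ℝ} (hm : (1 : ℝ) ≤ m) (hα : 0 ≤ α) :
    0 < Pquartic m α 2 := by
  have h : Pquartic m α 2 =
      2 + ((m : ℝ) + α) * (8 * ((m : ℝ) ^ 2 + m * α + α ^ 2) + 8 * α - 6) := by
    unfold Pquartic; ring
  rw [h]
  have : 0 ≤ 8 * ((m : ℝ) ^ 2 + m * α + α ^ 2) + 8 * α - 6 := by nlinarith [mul_nonneg hα hα]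
  positivity

/-- For `m ≥ 2` and `α > 2/m`, the quartic `P_{m,α}` has exactly one real root in the
interval `(1 − 1/(m+α), ∞)`. -/
theorem P_unique_root_right (m : ℕ) (hm : 2 ≤ m) (α : ℝ) (hα : 2 / (m : ℝ) < α) :
    ∃! γ : ℝ, 1 - 1 / ((m : ℝ) + α) < γ ∧ Pquartic m α γ = 0 := by
  have hm' : (2 : ℝ) ≤ m := by exact_mod_cast hm
  have hmα : 2 < (m : ℝ) * α := by
    rwa [div_lt_iff₀ (by positivity), mul_comm] at hα
  have hα0 : 0 < α := by nlinarith
  have hs : 0 < (m : ℝ) + α := by positivity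
  have hleft : Pquartic m α (1 - 1 / ((m : ℝ) + α)) < 0 := by
    rw [Pquartic_one_sub_one_div hs.ne']
    exact div_neg_of_neg_of_pos (by nlinarith) hs
  have hle : 1 - 1 / ((m : ℝ) + α) ≤ 2 := by
    linarith [one_div_pos.2 hs]
  obtain ⟨γ, hγ, hγ0⟩ := intermediate_value_Ioo hle (Pquartic_continuous m α).continuousOn
    ⟨hleft, Pquartic_two_pos (by linarith) hα0.le⟩
  refine ⟨γ, ⟨hγ.1, hγ0⟩, fun y hy => ?_⟩
  exact (Pquartic_strictMonoOn hm' hmα).injOn hy.1.le hγ.1.le (hy.2.trans hγ0.symm)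
end

section
/- Let m ≥ 2 be an integer, α > 2/m a real number, and γ a real number with 0 < γ < 1 − 1/(m+α). Then a > 0, the quadratic s ↦ a·s^2 − 2b·s + c satisfies a·s^2 − 2b·s + c ≥ c − b^2/a for all real s, and moreover c − b^2/a ≥ 0 if and only if P_{m,α}(γ) ≥ 0. -/
/-!
Completing the square, `a s² − 2 b s + c = (a s − b)² / a + (c − b²/a)`, gives the lower bound
once `a > 0`. With `M = m + α`, the hypothesis on `γ` says exactly that `M − 1 − γ M > 0`, and
`a = (1 − γ)(M − 1 − γ M)(M − 1 + γ M)` is then a product of positive factors. The sign of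
`c − b²/a` is that of `a c − b²`, and the latter factors as `γ (M − 1 − γ M) · P_{m,α}(γ)`.
-/

lemma sub_sq_div_le_quadratic {a : ℝ} (ha : 0 < a) (b c s : ℝ) :
    c - b ^ 2 / a ≤ a * s ^ 2 - 2 * b * s + c := by
  have hsquare : a * s ^ 2 - 2 * b * s + c = (a * s - b) ^ 2 / a + (c - b ^ 2 / a) := by
    field_simp
    ring
  rw [hsquare]
  linarith [div_nonneg (sq_nonneg (a * s - b)) ha.le]

lemma sub_sq_div_nonneg_iff {a : ℝ} (ha : 0 < a) (b c : ℝ) :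
    0 ≤ c - b ^ 2 / a ↔ 0 ≤ a * c - b ^ 2 := by
  rw [sub_nonneg, sub_nonneg, div_le_iff₀ ha, mul_comm]

section

variable {M γ : ℝ}

lemma sub_one_sub_mul_pos (hM : 0 < M) (hγ : γ < 1 - 1 / M) : 0 < M - 1 - γ * M := by
  have h := mul_lt_mul_of_pos_right hγ hM
  rw [sub_mul, one_div_mul_cancel hM.ne', one_mul] at h
  linarith

lemma one_sub_mul_sub_sq_pos (hM : 0 < M) (hγ0 : 0 < γ) (hγ : γ < 1 - 1 / M) :
    0 < (1 - γ) * ((M - 1) ^ 2 - γ ^ 2 * M ^ 2) := by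
  have hq := sub_one_sub_mul_pos hM hγ
  have hγ1 : 0 < 1 - γ := by linarith [one_div_pos.mpr hM]
  have hfactor : (M - 1) ^ 2 - γ ^ 2 * M ^ 2 = (M - 1 - γ * M) * (M - 1 + γ * M) := by ring
  rw [hfactor]
  have : 0 < M - 1 + γ * M := by nlinarith
  positivity

end

lemma discriminant_eq_mul_Pquartic (m : ℕ) (α γ : ℝ) :
    (1 - γ) * (((m : ℝ) + α - 1) ^ 2 - γ ^ 2 * ((m : ℝ) + α) ^ 2)
        * ((1 - γ) * γ ^ 2 * ((m : ℝ) + α) ^ 2 - 2 * γ * ((m : ℝ) + α - 1)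
          + (1 - γ) * ((m : ℝ) - α - 1) ^ 2)
      - (((m : ℝ) - α - 1) * (((m : ℝ) + α - 1) - γ * ((m : ℝ) + α))) ^ 2
      = γ * ((m : ℝ) + α - 1 - γ * ((m : ℝ) + α)) * Pquartic m α γ := by
  unfold Pquartic
  ring

theorem quadratic_lower_bound_general (m : ℕ) (α : ℝ) (hα : 2 / (m : ℝ) < α)
    (γ : ℝ) (hγ0 : 0 < γ) (hγ1 : γ < 1 - 1 / ((m : ℝ) + α)) :
    let a : ℝ := (1 - γ) * (((m : ℝ) + α - 1) ^ 2 - γ ^ 2 * ((m : ℝ) + α) ^ 2)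
    let b : ℝ := ((m : ℝ) - α - 1) * (((m : ℝ) + α - 1) - γ * ((m : ℝ) + α))
    let c : ℝ := (1 - γ) * γ ^ 2 * ((m : ℝ) + α) ^ 2 - 2 * γ * ((m : ℝ) + α - 1)
      + (1 - γ) * ((m : ℝ) - α - 1) ^ 2
    0 < a ∧ (∀ s : ℝ, a * s ^ 2 - 2 * b * s + c ≥ c - b ^ 2 / a) ∧
      (c - b ^ 2 / a ≥ 0 ↔ Pquartic m α γ ≥ 0) := by
  intro a b c
  have hα0 : 0 < α := (div_nonneg zero_le_two m.cast_nonneg).trans_lt hα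
  have hM : 0 < (m : ℝ) + α := by positivity
  have ha : 0 < a := one_sub_mul_sub_sq_pos hM hγ0 hγ1
  have hγq : 0 < γ * ((m : ℝ) + α - 1 - γ * ((m : ℝ) + α)) :=
    mul_pos hγ0 (sub_one_sub_mul_pos hM hγ1)
  refine ⟨ha, sub_sq_div_le_quadratic ha b c, ?_⟩
  rw [ge_iff_le, ge_iff_le, sub_sq_div_nonneg_iff ha, discriminant_eq_mul_Pquartic,
    mul_nonneg_iff_of_pos_left hγq]

/-- For `m ≥ 2`, `α > 2/m` and `γ ∈ (0, 1 − 1/(m+α))`: the leading coefficient `a` is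
positive, the quadratic `s ↦ a s² − 2 b s + c` is bounded below by `c − b²/a`, and
`c − b²/a ≥ 0` if and only if `P_{m,α}(γ) ≥ 0`. -/
theorem quadratic_lower_bound (m : ℕ) (hm : 2 ≤ m) (α : ℝ) (hα : 2 / (m : ℝ) < α)
    (γ : ℝ) (hγ0 : 0 < γ) (hγ1 : γ < 1 - 1 / ((m : ℝ) + α)) :
    let a : ℝ := (1 - γ) * (((m : ℝ) + α - 1) ^ 2 - γ ^ 2 * ((m : ℝ) + α) ^ 2)
    let b : ℝ := ((m : ℝ) - α - 1) * (((m : ℝ) + α - 1) - γ * ((m : ℝ) + α))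
    let c : ℝ := (1 - γ) * γ ^ 2 * ((m : ℝ) + α) ^ 2 - 2 * γ * ((m : ℝ) + α - 1)
      + (1 - γ) * ((m : ℝ) - α - 1) ^ 2
    0 < a ∧ (∀ s : ℝ, a * s ^ 2 - 2 * b * s + c ≥ c - b ^ 2 / a) ∧
      (c - b ^ 2 / a ≥ 0 ↔ Pquartic m α γ ≥ 0) :=
  quadratic_lower_bound_general m α hα γ hγ0 hγ1
end
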